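/- Let 0 ≤ α < 1 and μ ≤ μ(α) := (1−α)²/4, and let λ_{α,μ,n} = ((2−α)/2)² j_{ν(α,μ),n}² for n ≥ 1. Then there exists a constant ρ > 0 such that the gap condition |λ_{α,μ,n} − λ_{α,μ,m}| ≥ ρ |n² − m²| holds for all n, m ≥ 1. -/

import Mathlib

/-- The Bessel function of the first kind of order `ν`, defined via its power series
`J_ν(x) = Σ_{m≥0} ((−1)^m / (m! Γ(ν+m+1))) (x/2)^{2m+ν}` (real powers). -/
noncomputable def besselJ (ν : ℝ) (x : ℝ) : ℝ :=
  ∑' m : ℕ, (-1 : ℝ) ^ m / (m.factorial * Real.Gamma (ν + m + 1)) *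
    (x / 2) ^ (2 * (m : ℝ) + ν)

/-!
On `x > 0`, `u(x) = √x J_ν(x)` solves `u'' + (1 + (1/4 - ν²)/x²) u = 0`, and beyond the first
zero `j₁` the potential stays below `Q = 1 + 1/j₁²`. Sturm comparison with `sin (√Q x)` shows
that consecutive zeros are at least `δ = π/√Q` apart, so `j_n - j_m ≥ (n - m) δ` and
`j_n + j_m ≥ min(j₁, δ) (n + m)`; multiplying, `j_n² - j_m² ≥ ρ (n² - m²)`.
To differentiate `J_ν` we write `J_ν(x) = (x/2)^ν g(x²/4)` with the entire series
`g(t) = Σ c_m t^m`, which satisfies `t g'' + (ν + 1) g' + g = 0`.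
-/

open Set Filter Topology Real

namespace PowerSeriesDecay

/-- Makes `Σ d m t ^ m` entire, and is inherited by the termwise derivative `derivCoeff d`. -/
def CoeffDecay (d : ℕ → ℝ) : Prop := ∀ m : ℕ, ((m : ℝ) + 1) * |d (m + 1)| ≤ |d m|

def derivCoeff (d : ℕ → ℝ) (m : ℕ) : ℝ := ((m : ℝ) + 1) * d (m + 1)

noncomputable def seriesFun (d : ℕ → ℝ) (t : ℝ) : ℝ := ∑' m : ℕ, d m * t ^ m

variable {d : ℕ → ℝ}

lemma CoeffDecay.summable_mul_pow (hd : CoeffDecay d) (t : ℝ) :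
    Summable fun m : ℕ => d m * t ^ m := by
  refine summable_of_ratio_norm_eventually_le (r := 1 / 2) (by norm_num) ?_
  filter_upwards [eventually_ge_atTop ⌈2 * |t|⌉₊] with m hm
  have ht : 2 * |t| ≤ (m : ℝ) + 1 := by linarith [(Nat.ceil_le).1 hm]
  simp only [norm_mul, norm_pow, Real.norm_eq_abs, pow_succ]
  have hdm : |d (m + 1)| * ((m : ℝ) + 1) ≤ |d m| := by linarith [hd m]
  have : |d (m + 1)| * (2 * |t|) ≤ |d m| :=
    le_trans (mul_le_mul_of_nonneg_left ht (abs_nonneg _)) hdm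
  nlinarith [pow_nonneg (abs_nonneg t) m]

lemma CoeffDecay.deriv (hd : CoeffDecay d) : CoeffDecay (derivCoeff d) := by
  intro m
  have h := hd (m + 1)
  simp only [PowerSeriesDecay.derivCoeff, abs_mul, Nat.cast_add, Nat.cast_one] at h ⊢
  rw [abs_of_nonneg (by positivity : (0 : ℝ) ≤ (m : ℝ) + 1 + 1),
    abs_of_nonneg (by positivity : (0 : ℝ) ≤ (m : ℝ) + 1)]
  nlinarith [abs_nonneg (d (m + 1)), abs_nonneg (d (m + 2))]

lemma CoeffDecay.abs (hd : CoeffDecay d) : CoeffDecay fun m => |d m| := by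
  simpa [CoeffDecay] using hd

lemma CoeffDecay.hasDerivAt (hd : CoeffDecay d) (t : ℝ) :
    HasDerivAt (seriesFun d) (seriesFun (derivCoeff d) t) t := by
  set R : ℝ := |t| + 1
  have htR : t ∈ Ioo (-R) R := abs_lt.1 (by linarith)
  have hbound : Summable fun m : ℕ => |d m| * m * R ^ (m - 1) := by
    rw [← summable_nat_add_iff 1]
    refine (hd.deriv.abs.summable_mul_pow R).congr fun m => ?_
    simp only [PowerSeriesDecay.derivCoeff, abs_mul, Nat.add_sub_cancel, Nat.cast_succ,
      abs_of_nonneg (by positivity : (0 : ℝ) ≤ (m : ℝ) + 1)]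
    ring
  have key := hasDerivAt_tsum_of_isPreconnected hbound isOpen_Ioo isPreconnected_Ioo
    (g := fun m y => d m * y ^ m) (g' := fun m y => d m * (m * y ^ (m - 1)))
    (fun m y _ => (hasDerivAt_pow m y).const_mul (d m))
    (fun m y hy => by
      rw [Real.norm_eq_abs, abs_mul, abs_mul, Nat.abs_cast, abs_pow, ← mul_assoc]
      gcongr
      exact abs_le.2 ⟨hy.1.le, hy.2.le⟩)
    htR (hd.summable_mul_pow t) htR
  have hshift (m : ℕ) :
      d (m + 1) * ((m + 1 : ℕ) * t ^ (m + 1 - 1)) = derivCoeff d m * t ^ m := by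
    simp only [PowerSeriesDecay.derivCoeff, Nat.add_sub_cancel, Nat.cast_succ]
    ring
  have hsum : Summable fun m : ℕ => d m * (m * t ^ (m - 1)) := by
    rw [← summable_nat_add_iff 1]
    simpa only [hshift] using hd.deriv.summable_mul_pow t
  have hval : seriesFun (derivCoeff d) t = ∑' m : ℕ, d m * (m * t ^ (m - 1)) := by
    rw [hsum.tsum_eq_zero_add]
    simp only [hshift, seriesFun, Nat.cast_zero, zero_mul, mul_zero, zero_add]
  rw [hval]
  exact key

lemma CoeffDecay.hasSum_mul_seriesFun_derivCoeff (hd : CoeffDecay d) (t : ℝ) :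
    HasSum (fun m : ℕ => m * d m * t ^ m) (t * seriesFun (derivCoeff d) t) := by
  have h := (hd.deriv.summable_mul_pow t).hasSum.mul_left t
  have hshift : HasSum (fun m : ℕ => ((m + 1 : ℕ) : ℝ) * d (m + 1) * t ^ (m + 1))
      (t * seriesFun (derivCoeff d) t - ∑ m ∈ Finset.range 1, m * d m * t ^ m) := by
    simpa [derivCoeff, seriesFun, pow_succ, mul_comm, mul_left_comm, mul_assoc] using h
  exact (hasSum_nat_add_iff' 1).1 hshift

lemma CoeffDecay.hasDerivAt_comp_sq_div_four (hd : CoeffDecay d) (x : ℝ) :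
    HasDerivAt (fun y => seriesFun d (y ^ 2 / 4)) (seriesFun (derivCoeff d) (x ^ 2 / 4) * (x / 2))
      x := by
  have hsq : HasDerivAt (fun y : ℝ => y ^ 2 / 4) (x / 2) x := by
    refine ((hasDerivAt_pow 2 x).div_const 4).congr_deriv ?_
    ring
  exact (hd.hasDerivAt _).comp x hsq

end PowerSeriesDecay

open PowerSeriesDecay

noncomputable def besselCoeff (ν : ℝ) (m : ℕ) : ℝ :=
  (-1 : ℝ) ^ m / (m.factorial * Real.Gamma (ν + m + 1))

lemma besselCoeff_succ {ν : ℝ} (hν : -1 < ν) (m : ℕ) :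
    ((m : ℝ) + 1) * (ν + m + 1) * besselCoeff ν (m + 1) = -besselCoeff ν m := by
  have hpos : 0 < ν + m + 1 := by linarith [(Nat.cast_nonneg m : (0 : ℝ) ≤ m)]
  have hGamma : Real.Gamma (ν + ((m : ℝ) + 1) + 1) = (ν + m + 1) * Real.Gamma (ν + m + 1) := by
    rw [← Gamma_add_one hpos.ne']
    ring_nf
  have hΓ := (Gamma_pos_of_pos hpos).ne'
  simp only [besselCoeff, Nat.factorial_succ, Nat.cast_mul, Nat.cast_succ, pow_succ, hGamma]
  field_simp

lemma coeffDecay_besselCoeff {ν : ℝ} (hν : 0 ≤ ν) : CoeffDecay (besselCoeff ν) := by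
  intro m
  have h := congrArg abs (besselCoeff_succ (by linarith) m)
  rw [abs_neg, abs_mul, abs_mul, abs_of_pos (by positivity : (0 : ℝ) < m + 1),
    abs_of_pos (by positivity : (0 : ℝ) < ν + m + 1)] at h
  have hm : (0 : ℝ) ≤ m := Nat.cast_nonneg m
  have : 0 ≤ (m + 1) * (ν + m) * |besselCoeff ν (m + 1)| := by positivity
  nlinarith

/-- With `g = seriesFun (besselCoeff ν)`, this is `t g'' + (ν + 1) g' + g = 0`. -/
lemma besselCoeff_ode {ν : ℝ} (hν : 0 ≤ ν) (t : ℝ) :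
    t * seriesFun (derivCoeff (derivCoeff (besselCoeff ν))) t
      + (ν + 1) * seriesFun (derivCoeff (besselCoeff ν)) t
      + seriesFun (besselCoeff ν) t = 0 := by
  have hd := coeffDecay_besselCoeff hν
  have hsum := ((hd.deriv.hasSum_mul_seriesFun_derivCoeff t).add
    ((hd.deriv.summable_mul_pow t).hasSum.mul_left (ν + 1))).add (hd.summable_mul_pow t).hasSum
  refine hsum.unique (hasSum_zero.congr_fun fun m => ?_)
  have := besselCoeff_succ (by linarith) m
  simp only [derivCoeff]
  linear_combination t ^ m * this

lemma besselJ_eq {ν x : ℝ} (hx : 0 < x) :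
    besselJ ν x = (x / 2) ^ ν * seriesFun (besselCoeff ν) (x ^ 2 / 4) := by
  rw [besselJ, seriesFun, ← tsum_mul_left]
  refine tsum_congr fun m => ?_
  rw [rpow_add (by positivity), rpow_mul (by positivity), rpow_two,
    rpow_natCast, besselCoeff, show (x / 2) ^ 2 = x ^ 2 / 4 by ring]
  ring

/-- Equals `2 ^ ν * √x * J_ν(x)` for `x > 0`; written through the reduced series so that it
can be differentiated. -/
noncomputable def besselU (ν x : ℝ) : ℝ :=
  x ^ (ν + 1 / 2) * seriesFun (besselCoeff ν) (x ^ 2 / 4)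

noncomputable def besselUDeriv (ν x : ℝ) : ℝ :=
  (ν + 1 / 2) * x ^ (ν - 1 / 2) * seriesFun (besselCoeff ν) (x ^ 2 / 4)
    + 1 / 2 * x ^ (ν + 3 / 2) * seriesFun (derivCoeff (besselCoeff ν)) (x ^ 2 / 4)

noncomputable def besselPotential (ν x : ℝ) : ℝ := 1 + (1 / 4 - ν ^ 2) / x ^ 2

lemma besselU_eq_zero_iff {ν x : ℝ} (hx : 0 < x) : besselU ν x = 0 ↔ besselJ ν x = 0 := by
  rw [besselU, besselJ_eq hx, mul_eq_zero, mul_eq_zero,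
    or_iff_right (rpow_pos_of_pos hx _).ne', or_iff_right (by positivity)]

lemma hasDerivAt_besselU {ν x : ℝ} (hν : 0 ≤ ν) (hx : 0 < x) :
    HasDerivAt (besselU ν) (besselUDeriv ν x) x := by
  have h := (hasDerivAt_rpow_const (p := ν + 1 / 2) (Or.inl hx.ne')).mul
    ((coeffDecay_besselCoeff hν).hasDerivAt_comp_sq_div_four x)
  refine h.congr_deriv ?_
  rw [besselUDeriv, show ν + 3 / 2 = (ν - 1 / 2) + 2 by ring,
    show ν + 1 / 2 - 1 = ν - 1 / 2 by ring, show ν + 1 / 2 = (ν - 1 / 2) + 1 by ring,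
    rpow_add hx, rpow_add hx, rpow_one, rpow_two]
  ring

lemma hasDerivAt_besselUDeriv {ν x : ℝ} (hν : 0 ≤ ν) (hx : 0 < x) :
    HasDerivAt (besselUDeriv ν) (-besselPotential ν x * besselU ν x) x := by
  have hd := coeffDecay_besselCoeff hν
  have h := ((((hasDerivAt_rpow_const (p := ν - 1 / 2) (Or.inl hx.ne')).const_mul
      (ν + 1 / 2)).mul (hd.hasDerivAt_comp_sq_div_four x)).add
    (((hasDerivAt_rpow_const (p := ν + 3 / 2) (Or.inl hx.ne')).const_mul (1 / 2)).mul
      (hd.deriv.hasDerivAt_comp_sq_div_four x)))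
  refine h.congr_deriv ?_
  have ode := besselCoeff_ode hν (x ^ 2 / 4)
  set p := x ^ (ν - 3 / 2)
  have hpow (k : ℕ) : x ^ (ν - 3 / 2 + k) = p * x ^ k := by
    rw [rpow_add hx, rpow_natCast]
  rw [besselPotential, besselU, show ν - 1 / 2 - 1 = ν - 3 / 2 + (0 : ℕ) by push_cast; ring,
    show ν + 3 / 2 - 1 = ν - 3 / 2 + (2 : ℕ) by push_cast; ring,
    show ν + 1 / 2 = ν - 3 / 2 + (2 : ℕ) by push_cast; ring,
    show ν - 1 / 2 = ν - 3 / 2 + (1 : ℕ) by push_cast; ring,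
    show ν + 3 / 2 = ν - 3 / 2 + (3 : ℕ) by push_cast; ring, hpow, hpow, hpow, hpow]
  field_simp
  linear_combination 16 * p * x ^ 2 * ode

lemma HasDerivAt.nonpos_of_pos_on_Ioo {f : ℝ → ℝ} {f' a b : ℝ} (hf : HasDerivAt f f' b)
    (hab : a < b) (hb : f b = 0) (hpos : ∀ x ∈ Ioo a b, 0 < f x) : f' ≤ 0 := by
  have hslope : Tendsto (slope f b) (𝓝[<] b) (𝓝 f') :=
    (hasDerivAt_iff_tendsto_slope.1 hf).mono_left (nhdsWithin_mono b fun y hy => ne_of_lt hy)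
  refine le_of_tendsto hslope ?_
  filter_upwards [Ioo_mem_nhdsLT hab] with y hy
  rw [slope_def_field, hb]
  exact div_nonpos_of_nonneg_of_nonpos (by linarith [hpos y hy]) (by linarith [hy.2])

lemma IsPreconnected.forall_pos_or_forall_neg {f : ℝ → ℝ} {s : Set ℝ}
    (hs : IsPreconnected s) (hf : ContinuousOn f s) (hne : ∀ x ∈ s, f x ≠ 0) :
    (∀ x ∈ s, 0 < f x) ∨ ∀ x ∈ s, f x < 0 := by
  by_contra! h
  obtain ⟨⟨x, hx, hfx⟩, ⟨y, hy, hfy⟩⟩ := h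
  obtain ⟨z, hz, hfz⟩ := hs.intermediate_value hx hy hf ⟨hfx, hfy⟩
  exact hne z hz hfz

/-- Sturm comparison with `s = sin (√Q (x - a))`: the Wronskian `W = u s' - u' s` has
`W' = (q - Q) u s < 0` as long as `√Q (b - a) < π`, so `W b < W a = 0`, i.e. `u' b > 0`,
which is incompatible with `u > 0` to the left of its zero `b`. -/
theorem pi_div_sqrt_le_of_pos_between_zeros {u u' q : ℝ → ℝ} {a b Q : ℝ} (hab : a < b)
    (hQ : 0 < Q) (hu : ∀ x ∈ Icc a b, HasDerivAt u (u' x) x)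
    (hu' : ∀ x ∈ Icc a b, HasDerivAt u' (-q x * u x) x) (hq : ∀ x ∈ Icc a b, q x < Q)
    (ha : u a = 0) (hb : u b = 0) (hpos : ∀ x ∈ Ioo a b, 0 < u x) :
    π / √Q ≤ b - a := by
  by_contra! hlt
  set ω := √Q
  have hω : 0 < ω := sqrt_pos.2 hQ
  have hsin : ∀ x ∈ Ioc a b, 0 < sin (ω * (x - a)) := fun x hx =>
    sin_pos_of_pos_of_lt_pi (mul_pos hω (by linarith [hx.1]))
      (by nlinarith [(lt_div_iff₀' hω).1 hlt, hx.2])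
  set W : ℝ → ℝ := fun x => u x * (ω * cos (ω * (x - a))) - u' x * sin (ω * (x - a))
  have hW : ∀ x ∈ Icc a b, HasDerivAt W ((q x - Q) * (u x * sin (ω * (x - a)))) x := by
    intro x hx
    have hlin : HasDerivAt (fun y => ω * (y - a)) ω x := by
      simpa using ((hasDerivAt_id x).sub_const a).const_mul ω
    refine (((hu x hx).mul (((hasDerivAt_cos _).comp x hlin).const_mul ω)).sub
      ((hu' x hx).mul ((hasDerivAt_sin _).comp x hlin))).congr_deriv ?_
    simp only [Function.comp_apply]
    linear_combination -u x * sin (ω * (x - a)) * sq_sqrt hQ.le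
  have hanti : StrictAntiOn W (Icc a b) := by
    refine strictAntiOn_of_deriv_neg (convex_Icc a b)
      (fun x hx => (hW x hx).continuousAt.continuousWithinAt) fun x hx => ?_
    rw [interior_Icc] at hx
    rw [(hW x (Ioo_subset_Icc_self hx)).deriv]
    exact mul_neg_of_neg_of_pos (by linarith [hq x (Ioo_subset_Icc_self hx)])
      (mul_pos (hpos x hx) (hsin x (Ioo_subset_Ioc_self hx)))
  have hWb : W b < 0 := by
    have := hanti (left_mem_Icc.2 hab.le) (right_mem_Icc.2 hab.le) hab
    simpa [W, ha] using this
  have hu'b : 0 < u' b := by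
    have hsb := hsin b (right_mem_Ioc.2 hab)
    simp only [W, hb, zero_mul, zero_sub, neg_neg_iff_pos] at hWb
    exact pos_of_mul_pos_left hWb hsb.le
  linarith [(hu b (right_mem_Icc.2 hab.le)).nonpos_of_pos_on_Ioo hab hb hpos]

theorem pi_div_sqrt_le_of_ne_zero_between_zeros {u u' q : ℝ → ℝ} {a b Q : ℝ} (hab : a < b)
    (hQ : 0 < Q) (hu : ∀ x ∈ Icc a b, HasDerivAt u (u' x) x)
    (hu' : ∀ x ∈ Icc a b, HasDerivAt u' (-q x * u x) x) (hq : ∀ x ∈ Icc a b, q x < Q)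
    (ha : u a = 0) (hb : u b = 0) (hne : ∀ x ∈ Ioo a b, u x ≠ 0) :
    π / √Q ≤ b - a := by
  have hcont : ContinuousOn u (Ioo a b) := fun x hx =>
    (hu x (Ioo_subset_Icc_self hx)).continuousAt.continuousWithinAt
  rcases isPreconnected_Ioo.forall_pos_or_forall_neg hcont hne with hpos | hneg
  · exact pi_div_sqrt_le_of_pos_between_zeros hab hQ hu hu' hq ha hb hpos
  · refine pi_div_sqrt_le_of_pos_between_zeros (u := -u) (u' := -u') hab hQ
      (fun x hx => (hu x hx).neg) (fun x hx => ((hu' x hx).neg).congr_deriv ?_) hq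
      (by simp [ha]) (by simp [hb]) fun x hx => neg_pos.2 (hneg x hx)
    simp

lemma ne_zero_of_mem_Ioo_of_enumerates_zeros {f : ℝ → ℝ} {j : ℕ → ℝ}
    (hmono : ∀ n m : ℕ, 1 ≤ n → n < m → j n < j m)
    (henum : ∀ x : ℝ, 0 < x → f x = 0 → ∃ n : ℕ, 1 ≤ n ∧ j n = x)
    {n : ℕ} (hn : 1 ≤ n) {x : ℝ} (hx0 : 0 < x) (hx : x ∈ Ioo (j n) (j (n + 1))) :
    f x ≠ 0 := by
  have hj : StrictMonoOn j (Ici 1) := fun a ha b _ hab => hmono a b ha hab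
  intro hfx
  obtain ⟨k, hk, rfl⟩ := henum x hx0 hfx
  have h1 : n < k := (hj.lt_iff_lt hn hk).1 hx.1
  have h2 : k < n + 1 := (hj.lt_iff_lt hk (by simp)).1 hx.2
  omega

lemma besselPotential_lt {ν c x : ℝ} (hc : 0 < c) (hcx : c ≤ x) :
    besselPotential ν x < 1 + 1 / c ^ 2 := by
  have hx : 0 < x := hc.trans_le hcx
  calc besselPotential ν x ≤ 1 + 1 / 4 / x ^ 2 := by
        unfold besselPotential
        gcongr
        linarith [sq_nonneg ν]
    _ ≤ 1 + 1 / 4 / c ^ 2 := by gcongr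
    _ < 1 + 1 / c ^ 2 := by
        have : 0 < 1 / c ^ 2 := by positivity
        linarith [show 1 / 4 / c ^ 2 = 1 / 4 * (1 / c ^ 2) by ring]

theorem add_pi_div_sqrt_le_besselJ_zero {ν : ℝ} (hν : 0 ≤ ν) {j : ℕ → ℝ}
    (hpos : ∀ n : ℕ, 1 ≤ n → 0 < j n)
    (hzero : ∀ n : ℕ, 1 ≤ n → besselJ ν (j n) = 0)
    (hmono : ∀ n m : ℕ, 1 ≤ n → n < m → j n < j m)
    (henum : ∀ x : ℝ, 0 < x → besselJ ν x = 0 → ∃ n : ℕ, 1 ≤ n ∧ j n = x)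
    {n : ℕ} (hn : 1 ≤ n) :
    j n + π / √(1 + 1 / j 1 ^ 2) ≤ j (n + 1) := by
  have hj1 : j 1 ≤ j n := by
    rcases hn.eq_or_lt with rfl | h
    · exact le_rfl
    · exact (hmono 1 n le_rfl h).le
  have hIcc : ∀ x ∈ Icc (j n) (j (n + 1)), 0 < x := fun x hx => (hpos n hn).trans_le hx.1
  have hU (k : ℕ) (hk : 1 ≤ k) : besselU ν (j k) = 0 :=
    (besselU_eq_zero_iff (hpos k hk)).2 (hzero k hk)
  have hgap := pi_div_sqrt_le_of_ne_zero_between_zeros (hmono n (n + 1) hn n.lt_succ_self)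
    (by positivity) (fun x hx => hasDerivAt_besselU hν (hIcc x hx))
    (fun x hx => hasDerivAt_besselUDeriv hν (hIcc x hx))
    (fun x hx => besselPotential_lt (hpos 1 le_rfl) (hj1.trans hx.1))
    (hU n hn) (hU (n + 1) (by omega)) fun x hx =>
      (besselU_eq_zero_iff (hIcc x (Ioo_subset_Icc_self hx))).not.2
        (ne_zero_of_mem_Ioo_of_enumerates_zeros hmono henum hn
          (hIcc x (Ioo_subset_Icc_self hx)) hx)
  linarith

section GapSequence

variable {x : ℕ → ℝ} {δ : ℝ}

lemma add_mul_le_of_add_le_succ (hstep : ∀ n : ℕ, 1 ≤ n → x n + δ ≤ x (n + 1))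
    {m : ℕ} (hm : 1 ≤ m) (k : ℕ) : x m + k * δ ≤ x (m + k) := by
  induction k with
  | zero => simp
  | succ k ih =>
    have := hstep (m + k) (by omega)
    rw [Nat.cast_succ, ← add_assoc]
    linarith

/-- `x n ≥ c n` and `x n - x m ≥ (n - m) δ` with `c = min (x 1) δ`, and
`x n ^ 2 - x m ^ 2 = (x n - x m) (x n + x m)`. -/
lemma mul_sq_sub_sq_le_of_add_le_succ (hδ : 0 < δ) (hx1 : 0 < x 1)
    (hstep : ∀ n : ℕ, 1 ≤ n → x n + δ ≤ x (n + 1))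
    {m n : ℕ} (hm : 1 ≤ m) (hmn : m ≤ n) :
    δ * min (x 1) δ * ((n : ℝ) ^ 2 - (m : ℝ) ^ 2) ≤ x n ^ 2 - x m ^ 2 := by
  set c := min (x 1) δ
  have hlin {k : ℕ} (hk : 1 ≤ k) : c * k ≤ x k := by
    obtain ⟨i, rfl⟩ := Nat.exists_eq_add_of_le hk
    have := add_mul_le_of_add_le_succ hstep le_rfl i
    push_cast
    nlinarith [min_le_left (x 1) δ, min_le_right (x 1) δ, (Nat.cast_nonneg i : (0 : ℝ) ≤ i)]
  have hdiff : ((n : ℝ) - m) * δ ≤ x n - x m := by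
    have := add_mul_le_of_add_le_succ hstep hm (n - m)
    rw [Nat.add_sub_cancel' hmn, Nat.cast_sub hmn] at this
    linarith
  have hsum : c * n + c * m ≤ x n + x m := add_le_add (hlin (hm.trans hmn)) (hlin hm)
  have hnm : (0 : ℝ) ≤ (n - m) * δ := mul_nonneg (sub_nonneg.2 (by exact_mod_cast hmn)) hδ.le
  have hc : 0 < c := lt_min hx1 hδ
  calc δ * c * ((n : ℝ) ^ 2 - (m : ℝ) ^ 2) = ((n - m) * δ) * (c * n + c * m) := by ring
    _ ≤ (x n - x m) * (x n + x m) := mul_le_mul hdiff hsum (by positivity) (hnm.trans hdiff)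
    _ = x n ^ 2 - x m ^ 2 := by ring

theorem exists_mul_abs_sq_sub_sq_le_of_add_le_succ (hδ : 0 < δ) (hx1 : 0 < x 1)
    (hstep : ∀ n : ℕ, 1 ≤ n → x n + δ ≤ x (n + 1)) :
    ∃ ρ : ℝ, 0 < ρ ∧ ∀ n m : ℕ, 1 ≤ n → 1 ≤ m →
      ρ * |(n : ℝ) ^ 2 - (m : ℝ) ^ 2| ≤ |x n ^ 2 - x m ^ 2| := by
  have hρ : 0 < δ * min (x 1) δ := mul_pos hδ (lt_min hx1 hδ)
  have hle {m n : ℕ} (hm : 1 ≤ m) (hmn : m ≤ n) :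
      δ * min (x 1) δ * |(n : ℝ) ^ 2 - (m : ℝ) ^ 2| ≤ |x n ^ 2 - x m ^ 2| := by
    have hsq : (0 : ℝ) ≤ (n : ℝ) ^ 2 - (m : ℝ) ^ 2 := by
      have : (m : ℝ) ≤ n := by exact_mod_cast hmn
      nlinarith [(Nat.cast_nonneg m : (0 : ℝ) ≤ m)]
    have h := mul_sq_sub_sq_le_of_add_le_succ hδ hx1 hstep hm hmn
    rw [abs_of_nonneg hsq, abs_of_nonneg ((mul_nonneg hρ.le hsq).trans h)]
    exact h
  refine ⟨_, hρ, fun n m hn hm => ?_⟩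
  rcases le_total m n with hmn | hnm
  · exact hle hm hmn
  · rw [abs_sub_comm, abs_sub_comm (x n ^ 2)]
    exact hle hn hnm

end GapSequence

theorem stmt_6_general (α μ : ℝ) (hα1 : α < 1)
    (ν : ℝ) (hν : ν = 2 / (2 - α) * Real.sqrt ((1 - α) ^ 2 / 4 - μ))
    (j : ℕ → ℝ)
    (hpos : ∀ n : ℕ, 1 ≤ n → 0 < j n)
    (hzero : ∀ n : ℕ, 1 ≤ n → besselJ ν (j n) = 0)
    (hmono : ∀ n m : ℕ, 1 ≤ n → n < m → j n < j m)
    (henum : ∀ x : ℝ, 0 < x → besselJ ν x = 0 → ∃ n : ℕ, 1 ≤ n ∧ j n = x)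
    (lam : ℕ → ℝ) (hlam : lam = fun n : ℕ => ((2 - α) / 2) ^ 2 * j n ^ 2) :
    ∃ ρ : ℝ, 0 < ρ ∧ ∀ n m : ℕ, 1 ≤ n → 1 ≤ m →
      ρ * |(n : ℝ) ^ 2 - (m : ℝ) ^ 2| ≤ |lam n - lam m| := by
  have h2α : 0 < 2 - α := by linarith
  have hν0 : 0 ≤ ν := hν ▸ mul_nonneg (div_nonneg zero_le_two h2α.le) (sqrt_nonneg _)
  obtain ⟨ρ, hρ, hgap⟩ := exists_mul_abs_sq_sub_sq_le_of_add_le_succ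
    (div_pos pi_pos (sqrt_pos.2 (by positivity))) (hpos 1 le_rfl)
    fun n hn => add_pi_div_sqrt_le_besselJ_zero hν0 hpos hzero hmono henum hn
  have hC : 0 < ((2 - α) / 2) ^ 2 := pow_pos (div_pos h2α two_pos) 2
  refine ⟨((2 - α) / 2) ^ 2 * ρ, mul_pos hC hρ, fun n m hn hm => ?_⟩
  rw [hlam, ← mul_sub, abs_mul, abs_of_pos hC, mul_assoc]
  exact mul_le_mul_of_nonneg_left (hgap n m hn hm) hC.le

/-- gap condition for the eigenvalues. With `0 ≤ α < 1`,
`μ ≤ (1−α)²/4`, `ν = ν(α,μ)`, `(j n)_{n≥1}` the strictly increasing enumeration of the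
positive zeros of `J_ν` and `λ_n = ((2−α)/2)² (j n)²`, there is `ρ > 0` with
`|λ_n − λ_m| ≥ ρ |n² − m²|` for all `n, m ≥ 1`. -/
theorem stmt_6 (α μ : ℝ) (hα0 : 0 ≤ α) (hα1 : α < 1) (hμ : μ ≤ (1 - α) ^ 2 / 4)
    (ν : ℝ) (hν : ν = 2 / (2 - α) * Real.sqrt ((1 - α) ^ 2 / 4 - μ))
    (j : ℕ → ℝ)
    (hpos : ∀ n : ℕ, 1 ≤ n → 0 < j n)
    (hzero : ∀ n : ℕ, 1 ≤ n → besselJ ν (j n) = 0)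
    (hmono : ∀ n m : ℕ, 1 ≤ n → n < m → j n < j m)
    (henum : ∀ x : ℝ, 0 < x → besselJ ν x = 0 → ∃ n : ℕ, 1 ≤ n ∧ j n = x)
    (lam : ℕ → ℝ) (hlam : lam = fun n : ℕ => ((2 - α) / 2) ^ 2 * j n ^ 2) :
    ∃ ρ : ℝ, 0 < ρ ∧ ∀ n m : ℕ, 1 ≤ n → 1 ≤ m →
      ρ * |(n : ℝ) ^ 2 - (m : ℝ) ^ 2| ≤ |lam n - lam m| :=
  stmt_6_general α μ hα1 ν hν j hpos hzero hmono henum lam hlam
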